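/- arXiv:1105.3397 — 4 statements merged into one kernel-verified Lean document; each statement's English description precedes it below -/
import Mathlib

section
/- Let a : ℤ → ℝ with a_n ≠ 0 for all n, let b : ℤ → ℝ, and let λ ∈ ℝ. Let f, g : ℤ → ℂ be solutions of the Jacobi equation a_{n−1} y_{n−1} + a_n y_{n+1} + b_n y_n = λ y_n (n ∈ ℤ); then the componentwise conjugates f̄, ḡ are also solutions. If {g, ḡ} ≠ 0 and {f, f̄} = −{g, ḡ}, then |{g,f}|² = |{g, ḡ}|² + |{f, ḡ}|². -/
/-- `y` solves the Jacobi equation `a_{n-1} y_{n-1} + a_n y_{n+1} + b_n y_n = λ y_n` on `ℤ`. -/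
def JacobiSol (a b : ℤ → ℂ) (lam : ℂ) (y : ℤ → ℂ) : Prop :=
  ∀ n : ℤ, a (n - 1) * y (n - 1) + a n * y (n + 1) + b n * y n = lam * y n

/-- The Wronskian `{f,g}_n = a_n (f_n g_{n+1} - f_{n+1} g_n)`. -/
def Wron (a : ℤ → ℂ) (f g : ℤ → ℂ) (n : ℤ) : ℂ :=
  a n * (f n * g (n + 1) - f (n + 1) * g n)

/-! Conjugation fixes the real coefficients, so it maps solutions to solutions and conjugates
Wronskians; in particular `{g, ḡ}` is purely imaginary. Expanding the four Wronskians at one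
index gives the Plücker-type identity `|{g,f}|² - |{f,ḡ}|² = {g,ḡ} {f,f̄}`, and the
hypothesis `{f,f̄} = -{g,ḡ}` turns its right-hand side into `-{g,ḡ}² = |{g,ḡ}|²`. -/

open ComplexConjugate

theorem JacobiSol.conj {a b : ℤ → ℝ} {lam : ℝ} {y : ℤ → ℂ}
    (hy : JacobiSol (fun n => (a n : ℂ)) (fun n => (b n : ℂ)) lam y) :
    JacobiSol (fun n => (a n : ℂ)) (fun n => (b n : ℂ)) lam (fun n => conj (y n)) := by
  intro n
  simpa only [map_add, map_mul, Complex.conj_ofReal] using congrArg conj (hy n)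

theorem Wron_swap (a f g : ℤ → ℂ) (n : ℤ) : Wron a g f n = -Wron a f g n := by
  unfold Wron
  ring

theorem conj_Wron (a : ℤ → ℝ) (f g : ℤ → ℂ) (n : ℤ) :
    conj (Wron (fun n => (a n : ℂ)) f g n)
      = Wron (fun n => (a n : ℂ)) (fun n => conj (f n)) (fun n => conj (g n)) n := by
  simp only [Wron, map_mul, map_sub, Complex.conj_ofReal]

theorem conj_Wron_self_conj (a : ℤ → ℝ) (g : ℤ → ℂ) (n : ℤ) :
    conj (Wron (fun n => (a n : ℂ)) g (fun n => conj (g n)) n)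
      = -Wron (fun n => (a n : ℂ)) g (fun n => conj (g n)) n := by
  rw [conj_Wron, Wron_swap]
  simp only [Complex.conj_conj]

theorem Wron_mul_conj_sub_Wron_mul_conj (a : ℤ → ℝ) (f g : ℤ → ℂ) (n : ℤ) :
    Wron (fun n => (a n : ℂ)) g f n * conj (Wron (fun n => (a n : ℂ)) g f n)
      - Wron (fun n => (a n : ℂ)) f (fun n => conj (g n)) n
        * conj (Wron (fun n => (a n : ℂ)) f (fun n => conj (g n)) n)
      = Wron (fun n => (a n : ℂ)) g (fun n => conj (g n)) n
        * Wron (fun n => (a n : ℂ)) f (fun n => conj (f n)) n := by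
  simp only [Wron, map_mul, map_sub, Complex.conj_conj, Complex.conj_ofReal]
  ring

theorem wronskian_unitarity_general (a : ℤ → ℝ) (b : ℤ → ℝ) (lam : ℝ)
    (f g : ℤ → ℂ)
    (hf : JacobiSol (fun n => (a n : ℂ)) (fun n => (b n : ℂ)) (lam : ℂ) f)
    (hg : JacobiSol (fun n => (a n : ℂ)) (fun n => (b n : ℂ)) (lam : ℂ) g) :
    JacobiSol (fun n => (a n : ℂ)) (fun n => (b n : ℂ)) (lam : ℂ)
      (fun n => (starRingEnd ℂ) (f n)) ∧
    JacobiSol (fun n => (a n : ℂ)) (fun n => (b n : ℂ)) (lam : ℂ)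
      (fun n => (starRingEnd ℂ) (g n)) ∧
    (Wron (fun n => (a n : ℂ)) g (fun n => (starRingEnd ℂ) (g n)) 0 ≠ 0 →
     Wron (fun n => (a n : ℂ)) f (fun n => (starRingEnd ℂ) (f n)) 0
       = -Wron (fun n => (a n : ℂ)) g (fun n => (starRingEnd ℂ) (g n)) 0 →
     ‖Wron (fun n => (a n : ℂ)) g f 0‖ ^ 2
       = ‖Wron (fun n => (a n : ℂ)) g (fun n => (starRingEnd ℂ) (g n)) 0‖ ^ 2
         + ‖Wron (fun n => (a n : ℂ)) f (fun n => (starRingEnd ℂ) (g n)) 0‖ ^ 2) := by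
  refine ⟨hf.conj, hg.conj, fun _ hfg => ?_⟩
  have hplucker := Wron_mul_conj_sub_Wron_mul_conj a f g 0
  have himag := conj_Wron_self_conj a g 0
  apply Complex.ofReal_injective
  push_cast
  rw [← Complex.mul_conj', ← Complex.mul_conj', ← Complex.mul_conj']
  linear_combination
    hplucker + Wron (fun n => (a n : ℂ)) g (fun n => conj (g n)) 0 * (hfg - himag)

/-- For a real Jacobi equation the componentwise conjugates of solutions are solutions,
and the unitarity identity `|{g,f}|² = |{g,ḡ}|² + |{f,ḡ}|²` holds whenever
`{g,ḡ} ≠ 0` and `{f,f̄} = -{g,ḡ}`. -/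
theorem wronskian_unitarity (a : ℤ → ℝ) (ha : ∀ n : ℤ, a n ≠ 0) (b : ℤ → ℝ) (lam : ℝ)
    (f g : ℤ → ℂ)
    (hf : JacobiSol (fun n => (a n : ℂ)) (fun n => (b n : ℂ)) (lam : ℂ) f)
    (hg : JacobiSol (fun n => (a n : ℂ)) (fun n => (b n : ℂ)) (lam : ℂ) g) :
    JacobiSol (fun n => (a n : ℂ)) (fun n => (b n : ℂ)) (lam : ℂ)
      (fun n => (starRingEnd ℂ) (f n)) ∧
    JacobiSol (fun n => (a n : ℂ)) (fun n => (b n : ℂ)) (lam : ℂ)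
      (fun n => (starRingEnd ℂ) (g n)) ∧
    (Wron (fun n => (a n : ℂ)) g (fun n => (starRingEnd ℂ) (g n)) 0 ≠ 0 →
     Wron (fun n => (a n : ℂ)) f (fun n => (starRingEnd ℂ) (f n)) 0
       = -Wron (fun n => (a n : ℂ)) g (fun n => (starRingEnd ℂ) (g n)) 0 →
     ‖Wron (fun n => (a n : ℂ)) g f 0‖ ^ 2
       = ‖Wron (fun n => (a n : ℂ)) g (fun n => (starRingEnd ℂ) (g n)) 0‖ ^ 2
         + ‖Wron (fun n => (a n : ℂ)) f (fun n => (starRingEnd ℂ) (g n)) 0‖ ^ 2) :=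
  wronskian_unitarity_general a b lam f g hf hg
end

section
/- Let λ ∈ ℂ with φ_q(λ) ≠ 0, let ω ∈ ℂ satisfy ω² = 1 − Δ(λ)², set m_± = (ϕ(λ) ± iω)/φ_q(λ), f⁺_j = θ⁺_j(λ) + m₊ φ⁺_j(λ) for j = 0, 1, and w = a_0 f⁺_1 + (v_0 − a⁰_0 m₋) f⁺_0. Then (φ_q(λ)/a⁰_0) · w = 2iω (1 + A(λ)) − J(λ). -/
section Wronskian

variable {a b : ℤ → ℂ} {lam : ℂ} {f g : ℤ → ℂ}

lemma wron_add_one (hf : JacobiSol a b lam f) (hg : JacobiSol a b lam g) (n : ℤ) :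
    Wron a f g (n + 1) = Wron a f g n := by
  have hfn := hf (n + 1)
  have hgn := hg (n + 1)
  simp only [add_sub_cancel_right] at hfn hgn
  simp only [Wron]
  linear_combination f (n + 1) * hgn - g (n + 1) * hfn

lemma wron_eq_wron_zero (hf : JacobiSol a b lam f) (hg : JacobiSol a b lam g) (n : ℤ) :
    Wron a f g n = Wron a f g 0 := by
  induction n using Int.induction_on with
  | zero => rfl
  | succ k ih => rw [wron_add_one hf hg, ih]
  | pred k ih => rw [← ih, ← wron_add_one hf hg, sub_add_cancel]

lemma fundamental_det_eq_one {θ φ : ℤ → ℂ} (hθ : JacobiSol a b lam θ) (hφ : JacobiSol a b lam φ)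
    (hθ0 : θ 0 = 1) (hθ1 : θ 1 = 0) (hφ0 : φ 0 = 0) (hφ1 : φ 1 = 1)
    {N : ℤ} (haN : a N = a 0) (ha : a 0 ≠ 0) :
    θ N * φ (N + 1) - θ (N + 1) * φ N = 1 := by
  have hW := wron_eq_wron_zero hθ hφ N
  simp only [Wron, zero_add, hθ0, hθ1, hφ0, hφ1, haN] at hW
  exact mul_left_cancel₀ ha (by linear_combination hW)

end Wronskian

/- `ϕ² + ω² = ϕ² - Δ² + 1 = 1 - θ_q φ_{q+1}`, which the determinant identity turns into
`-θ_{q+1} φ_q`. -/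
lemma weyl_m_plus_mul_m_minus {θq θq1 φq φq1 ω : ℂ} (hφq : φq ≠ 0)
    (hdet : θq * φq1 - θq1 * φq = 1) (hω : ω ^ 2 = 1 - ((φq1 + θq) / 2) ^ 2) :
    ((φq1 - θq) / 2 + Complex.I * ω) / φq * (((φq1 - θq) / 2 - Complex.I * ω) / φq)
      = -θq1 / φq := by
  field_simp
  linear_combination 4 * hω - 4 * hdet - 4 * ω ^ 2 * Complex.I_sq

theorem w_hat_representation_general
    (q : ℕ) (a0 b0 : ℤ → ℝ)
    (hpa : ∀ n : ℤ, a0 (n + (q : ℤ)) = a0 n)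
    (ha0 : ∀ n : ℤ, 0 < a0 n)
    (θ φ : ℂ → ℤ → ℂ)
    (hθ : ∀ lam : ℂ, JacobiSol (fun n => (a0 n : ℂ)) (fun n => (b0 n : ℂ)) lam (θ lam))
    (hθ0 : ∀ lam : ℂ, θ lam 0 = 1) (hθ1 : ∀ lam : ℂ, θ lam 1 = 0)
    (hφ : ∀ lam : ℂ, JacobiSol (fun n => (a0 n : ℂ)) (fun n => (b0 n : ℂ)) lam (φ lam))
    (hφ0 : ∀ lam : ℂ, φ lam 0 = 0) (hφ1 : ∀ lam : ℂ, φ lam 1 = 1)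
    (u v : ℤ → ℝ)
    (Θp Φp : ℂ → ℤ → ℂ)
    (lam : ℂ) (hφq : φ lam (q : ℤ) ≠ 0) (ω : ℂ)
    (hω : ω ^ 2 = 1 - ((φ lam ((q : ℤ) + 1) + θ lam (q : ℤ)) / 2) ^ 2)
    (mp mm : ℂ)
    (hmp : mp = ((φ lam ((q : ℤ) + 1) - θ lam (q : ℤ)) / 2 + Complex.I * ω) / φ lam (q : ℤ))
    (hmm : mm = ((φ lam ((q : ℤ) + 1) - θ lam (q : ℤ)) / 2 - Complex.I * ω) / φ lam (q : ℤ))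
    (fp0 fp1 : ℂ)
    (hfp0 : fp0 = Θp lam 0 + mp * Φp lam 0)
    (hfp1 : fp1 = Θp lam 1 + mp * Φp lam 1)
    (Av Jv : ℂ)
    (hAv : Av = (1 / 2) * (((a0 0 + u 0 : ℝ) : ℂ) / ((a0 0 : ℝ) : ℂ) * Φp lam 1
        + ((v 0 : ℝ) : ℂ) / ((a0 0 : ℝ) : ℂ) * Φp lam 0 + Θp lam 0) - 1)
    (hJv : Jv = -(((a0 0 + u 0 : ℝ) : ℂ) / ((a0 0 : ℝ) : ℂ) * φ lam (q : ℤ) * Θp lam 1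
        + (φ lam ((q : ℤ) + 1) - θ lam (q : ℤ)) / 2
          * (((a0 0 + u 0 : ℝ) : ℂ) / ((a0 0 : ℝ) : ℂ) * Φp lam 1 - Θp lam 0)
        + ((v 0 : ℝ) : ℂ) / ((a0 0 : ℝ) : ℂ)
          * (φ lam (q : ℤ) * Θp lam 0 + (φ lam ((q : ℤ) + 1) - θ lam (q : ℤ)) / 2 * Φp lam 0)
        + θ lam ((q : ℤ) + 1) * Φp lam 0))
    (w : ℂ)
    (hw : w = ((a0 0 + u 0 : ℝ) : ℂ) * fp1 + (((v 0 : ℝ) : ℂ) - ((a0 0 : ℝ) : ℂ) * mm) * fp0) :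
    (φ lam (q : ℤ) / ((a0 0 : ℝ) : ℂ)) * w = 2 * Complex.I * ω * (1 + Av) - Jv := by
  have ha : ((a0 0 : ℝ) : ℂ) ≠ 0 := by exact_mod_cast (ha0 0).ne'
  have haq : ((a0 (q : ℤ) : ℝ) : ℂ) = a0 0 := by rw [← zero_add (q : ℤ), hpa]
  have hdet := fundamental_det_eq_one (hθ lam) (hφ lam) (hθ0 lam) (hθ1 lam) (hφ0 lam) (hφ1 lam)
    haq ha
  have hmp' : mp * φ lam q = (φ lam (q + 1) - θ lam q) / 2 + Complex.I * ω := by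
    rw [hmp, div_mul_cancel₀ _ hφq]
  have hmm' : mm * φ lam q = (φ lam (q + 1) - θ lam q) / 2 - Complex.I * ω := by
    rw [hmm, div_mul_cancel₀ _ hφq]
  have hmpmm : mp * mm * φ lam q = -θ lam (q + 1) := by
    rw [hmp, hmm, weyl_m_plus_mul_m_minus hφq hdet hω, div_mul_cancel₀ _ hφq]
  subst hw hfp0 hfp1 hAv hJv
  field_simp
  linear_combination 2 * (((a0 0 + u 0 : ℝ) : ℂ) * Φp lam 1 + ((v 0 : ℝ) : ℂ) * Φp lam 0) * hmp'
    - 2 * ((a0 0 : ℝ) : ℂ) * Θp lam 0 * hmm' - 2 * ((a0 0 : ℝ) : ℂ) * Φp lam 0 * hmpmm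

/-- The representation `ŵ = (φ_q/a⁰_0) w = 2iω(1+A) − J`. -/
theorem w_hat_representation
    (q : ℕ) (hq : 2 ≤ q) (a0 b0 : ℤ → ℝ)
    (hpa : ∀ n : ℤ, a0 (n + (q : ℤ)) = a0 n) (hpb : ∀ n : ℤ, b0 (n + (q : ℤ)) = b0 n)
    (ha0 : ∀ n : ℤ, 0 < a0 n) (hprod : ∏ j ∈ Finset.Icc (1 : ℤ) (q : ℤ), a0 j = 1)
    (θ φ : ℂ → ℤ → ℂ)
    (hθ : ∀ lam : ℂ, JacobiSol (fun n => (a0 n : ℂ)) (fun n => (b0 n : ℂ)) lam (θ lam))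
    (hθ0 : ∀ lam : ℂ, θ lam 0 = 1) (hθ1 : ∀ lam : ℂ, θ lam 1 = 0)
    (hφ : ∀ lam : ℂ, JacobiSol (fun n => (a0 n : ℂ)) (fun n => (b0 n : ℂ)) lam (φ lam))
    (hφ0 : ∀ lam : ℂ, φ lam 0 = 0) (hφ1 : ∀ lam : ℂ, φ lam 1 = 1)
    (p : ℕ) (hp : 1 ≤ p) (u v : ℤ → ℝ)
    (hsupp : ∀ n : ℤ, (n < 0 ∨ (p : ℤ) < n) → u n = 0 ∧ v n = 0)
    (hapos : ∀ n : ℤ, 0 < a0 n + u n)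
    (Θp Φp : ℂ → ℤ → ℂ)
    (hΘp : ∀ lam : ℂ, JacobiSol (fun n => ((a0 n + u n : ℝ) : ℂ))
      (fun n => ((b0 n + v n : ℝ) : ℂ)) lam (Θp lam))
    (hΘpb : ∀ lam : ℂ, ∀ n : ℤ, (p : ℤ) + 1 ≤ n → Θp lam n = θ lam n)
    (hΦp : ∀ lam : ℂ, JacobiSol (fun n => ((a0 n + u n : ℝ) : ℂ))
      (fun n => ((b0 n + v n : ℝ) : ℂ)) lam (Φp lam))
    (hΦpb : ∀ lam : ℂ, ∀ n : ℤ, (p : ℤ) + 1 ≤ n → Φp lam n = φ lam n)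
    (lam : ℂ) (hφq : φ lam (q : ℤ) ≠ 0) (ω : ℂ)
    (hω : ω ^ 2 = 1 - ((φ lam ((q : ℤ) + 1) + θ lam (q : ℤ)) / 2) ^ 2)
    (mp mm : ℂ)
    (hmp : mp = ((φ lam ((q : ℤ) + 1) - θ lam (q : ℤ)) / 2 + Complex.I * ω) / φ lam (q : ℤ))
    (hmm : mm = ((φ lam ((q : ℤ) + 1) - θ lam (q : ℤ)) / 2 - Complex.I * ω) / φ lam (q : ℤ))
    (fp0 fp1 : ℂ)
    (hfp0 : fp0 = Θp lam 0 + mp * Φp lam 0)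
    (hfp1 : fp1 = Θp lam 1 + mp * Φp lam 1)
    (Av Jv : ℂ)
    (hAv : Av = (1 / 2) * (((a0 0 + u 0 : ℝ) : ℂ) / ((a0 0 : ℝ) : ℂ) * Φp lam 1
        + ((v 0 : ℝ) : ℂ) / ((a0 0 : ℝ) : ℂ) * Φp lam 0 + Θp lam 0) - 1)
    (hJv : Jv = -(((a0 0 + u 0 : ℝ) : ℂ) / ((a0 0 : ℝ) : ℂ) * φ lam (q : ℤ) * Θp lam 1
        + (φ lam ((q : ℤ) + 1) - θ lam (q : ℤ)) / 2
          * (((a0 0 + u 0 : ℝ) : ℂ) / ((a0 0 : ℝ) : ℂ) * Φp lam 1 - Θp lam 0)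
        + ((v 0 : ℝ) : ℂ) / ((a0 0 : ℝ) : ℂ)
          * (φ lam (q : ℤ) * Θp lam 0 + (φ lam ((q : ℤ) + 1) - θ lam (q : ℤ)) / 2 * Φp lam 0)
        + θ lam ((q : ℤ) + 1) * Φp lam 0))
    (w : ℂ)
    (hw : w = ((a0 0 + u 0 : ℝ) : ℂ) * fp1 + (((v 0 : ℝ) : ℂ) - ((a0 0 : ℝ) : ℂ) * mm) * fp0) :
    (φ lam (q : ℤ) / ((a0 0 : ℝ) : ℂ)) * w = 2 * Complex.I * ω * (1 + Av) - Jv :=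
  w_hat_representation_general q a0 b0 hpa ha0 θ φ hθ hθ0 hθ1 hφ hφ0 hφ1 u v Θp Φp lam hφq ω hω mp
    mm hmp hmm fp0 fp1 hfp0 hfp1 Av Jv hAv hJv w hw
end

section
/- Let λ ∈ ℂ with φ_q(λ) ≠ 0, let ω ∈ ℂ satisfy ω² = 1 − Δ(λ)², set m_± = (ϕ(λ) ± iω)/φ_q(λ), f⁺_j = θ⁺_j(λ) + m₊ φ⁺_j(λ) for j = 0, 1, and s = (a⁰_0 m₊ − v_0) f⁺_0 − a_0 f⁺_1. Then (φ_q(λ)/a⁰_0) · s = −2iω (1 + Ã(λ)) + J̃(λ). -/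
/-!
With `F = φ_q` and `F m₊ = ϕ + iω`, the only nonlinear occurrence of `m₊` in `s` is
`F m₊² = (ϕ + iω)² / F = (ϕ² - (1 - Δ²) + 2iωϕ) / F`, using `ω² = 1 - Δ²`. Thus `(F / a⁰_0) s` is
affine in `iω`; its coefficient is `-2(1 + Ã)` and its constant term is `J̃`.
-/

lemma div_mul_boundary_eq {K : Type*} [Field K] [NeZero (2 : K)]
    {i ω Δ ϕ F m a a' v T₀ T₁ P₀ P₁ : K} (hi : i ^ 2 = -1) (hω : ω ^ 2 = 1 - Δ ^ 2)
    (hF : F ≠ 0) (ha : a ≠ 0) (hm : m = (ϕ + i * ω) / F) :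
    F / a * ((a * m - v) * (T₀ + m * P₀) - a' * (T₁ + m * P₁)) =
      -(2 * i * ω) * (1 + ((1 / 2) * (a' / a * P₁ + v / a * P₀ - T₀ - 2 * ϕ / F * P₀) - 1))
        + -(a' / a * F * T₁ + ϕ * (a' / a * P₁ - T₀) + v / a * (F * T₀ + ϕ * P₀)
          - (ϕ ^ 2 - (1 - Δ ^ 2)) / F * P₀) := by
  have hiω : (i * ω) ^ 2 = -(1 - Δ ^ 2) := by rw [mul_pow, hi, hω, neg_one_mul]
  subst hm
  field_simp
  linear_combination (a * P₀) * hiω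

theorem s_hat_representation_general
    (q : ℕ) (a0 : ℤ → ℝ)
    (ha0 : ∀ n : ℤ, 0 < a0 n)
    (θ φ : ℂ → ℤ → ℂ)
    (u v : ℤ → ℝ)
    (Θp Φp : ℂ → ℤ → ℂ)
    (lam : ℂ) (hφq : φ lam (q : ℤ) ≠ 0) (ω : ℂ)
    (hω : ω ^ 2 = 1 - ((φ lam ((q : ℤ) + 1) + θ lam (q : ℤ)) / 2) ^ 2)
    (mp : ℂ)
    (hmp : mp = ((φ lam ((q : ℤ) + 1) - θ lam (q : ℤ)) / 2 + Complex.I * ω) / φ lam (q : ℤ))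
    (fp0 fp1 : ℂ)
    (hfp0 : fp0 = Θp lam 0 + mp * Φp lam 0)
    (hfp1 : fp1 = Θp lam 1 + mp * Φp lam 1)
    (Atv Jtv : ℂ)
    (hAtv : Atv = (1 / 2) * (((a0 0 + u 0 : ℝ) : ℂ) / ((a0 0 : ℝ) : ℂ) * Φp lam 1
        + ((v 0 : ℝ) : ℂ) / ((a0 0 : ℝ) : ℂ) * Φp lam 0 - Θp lam 0
        - (2 * ((φ lam ((q : ℤ) + 1) - θ lam (q : ℤ)) / 2) / φ lam (q : ℤ)) * Φp lam 0) - 1)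
    (hJtv : Jtv = -(((a0 0 + u 0 : ℝ) : ℂ) / ((a0 0 : ℝ) : ℂ) * φ lam (q : ℤ) * Θp lam 1
        + (φ lam ((q : ℤ) + 1) - θ lam (q : ℤ)) / 2
          * (((a0 0 + u 0 : ℝ) : ℂ) / ((a0 0 : ℝ) : ℂ) * Φp lam 1 - Θp lam 0)
        + ((v 0 : ℝ) : ℂ) / ((a0 0 : ℝ) : ℂ)
          * (φ lam (q : ℤ) * Θp lam 0 + (φ lam ((q : ℤ) + 1) - θ lam (q : ℤ)) / 2 * Φp lam 0)
        - ((((φ lam ((q : ℤ) + 1) - θ lam (q : ℤ)) / 2) ^ 2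
            - (1 - ((φ lam ((q : ℤ) + 1) + θ lam (q : ℤ)) / 2) ^ 2)) / φ lam (q : ℤ))
          * Φp lam 0))
    (s : ℂ)
    (hs : s = (((a0 0 : ℝ) : ℂ) * mp - ((v 0 : ℝ) : ℂ)) * fp0 - ((a0 0 + u 0 : ℝ) : ℂ) * fp1) :
    (φ lam (q : ℤ) / ((a0 0 : ℝ) : ℂ)) * s = -(2 * Complex.I * ω) * (1 + Atv) + Jtv := by
  have ha : ((a0 0 : ℝ) : ℂ) ≠ 0 := Complex.ofReal_ne_zero.mpr (ha0 0).ne'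
  subst hs hfp0 hfp1 hAtv hJtv
  exact div_mul_boundary_eq Complex.I_sq hω hφq ha hmp

/-- The representation `ŝ = (φ_q/a⁰_0) s = −2iω(1+Ã) + J̃`. -/
theorem s_hat_representation
    (q : ℕ) (hq : 2 ≤ q) (a0 b0 : ℤ → ℝ)
    (hpa : ∀ n : ℤ, a0 (n + (q : ℤ)) = a0 n) (hpb : ∀ n : ℤ, b0 (n + (q : ℤ)) = b0 n)
    (ha0 : ∀ n : ℤ, 0 < a0 n) (hprod : ∏ j ∈ Finset.Icc (1 : ℤ) (q : ℤ), a0 j = 1)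
    (θ φ : ℂ → ℤ → ℂ)
    (hθ : ∀ lam : ℂ, JacobiSol (fun n => (a0 n : ℂ)) (fun n => (b0 n : ℂ)) lam (θ lam))
    (hθ0 : ∀ lam : ℂ, θ lam 0 = 1) (hθ1 : ∀ lam : ℂ, θ lam 1 = 0)
    (hφ : ∀ lam : ℂ, JacobiSol (fun n => (a0 n : ℂ)) (fun n => (b0 n : ℂ)) lam (φ lam))
    (hφ0 : ∀ lam : ℂ, φ lam 0 = 0) (hφ1 : ∀ lam : ℂ, φ lam 1 = 1)
    (p : ℕ) (hp : 1 ≤ p) (u v : ℤ → ℝ)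
    (hsupp : ∀ n : ℤ, (n < 0 ∨ (p : ℤ) < n) → u n = 0 ∧ v n = 0)
    (hapos : ∀ n : ℤ, 0 < a0 n + u n)
    (Θp Φp : ℂ → ℤ → ℂ)
    (hΘp : ∀ lam : ℂ, JacobiSol (fun n => ((a0 n + u n : ℝ) : ℂ))
      (fun n => ((b0 n + v n : ℝ) : ℂ)) lam (Θp lam))
    (hΘpb : ∀ lam : ℂ, ∀ n : ℤ, (p : ℤ) + 1 ≤ n → Θp lam n = θ lam n)
    (hΦp : ∀ lam : ℂ, JacobiSol (fun n => ((a0 n + u n : ℝ) : ℂ))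
      (fun n => ((b0 n + v n : ℝ) : ℂ)) lam (Φp lam))
    (hΦpb : ∀ lam : ℂ, ∀ n : ℤ, (p : ℤ) + 1 ≤ n → Φp lam n = φ lam n)
    (lam : ℂ) (hφq : φ lam (q : ℤ) ≠ 0) (ω : ℂ)
    (hω : ω ^ 2 = 1 - ((φ lam ((q : ℤ) + 1) + θ lam (q : ℤ)) / 2) ^ 2)
    (mp mm : ℂ)
    (hmp : mp = ((φ lam ((q : ℤ) + 1) - θ lam (q : ℤ)) / 2 + Complex.I * ω) / φ lam (q : ℤ))
    (hmm : mm = ((φ lam ((q : ℤ) + 1) - θ lam (q : ℤ)) / 2 - Complex.I * ω) / φ lam (q : ℤ))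
    (fp0 fp1 : ℂ)
    (hfp0 : fp0 = Θp lam 0 + mp * Φp lam 0)
    (hfp1 : fp1 = Θp lam 1 + mp * Φp lam 1)
    (Atv Jtv : ℂ)
    (hAtv : Atv = (1 / 2) * (((a0 0 + u 0 : ℝ) : ℂ) / ((a0 0 : ℝ) : ℂ) * Φp lam 1
        + ((v 0 : ℝ) : ℂ) / ((a0 0 : ℝ) : ℂ) * Φp lam 0 - Θp lam 0
        - (2 * ((φ lam ((q : ℤ) + 1) - θ lam (q : ℤ)) / 2) / φ lam (q : ℤ)) * Φp lam 0) - 1)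
    (hJtv : Jtv = -(((a0 0 + u 0 : ℝ) : ℂ) / ((a0 0 : ℝ) : ℂ) * φ lam (q : ℤ) * Θp lam 1
        + (φ lam ((q : ℤ) + 1) - θ lam (q : ℤ)) / 2
          * (((a0 0 + u 0 : ℝ) : ℂ) / ((a0 0 : ℝ) : ℂ) * Φp lam 1 - Θp lam 0)
        + ((v 0 : ℝ) : ℂ) / ((a0 0 : ℝ) : ℂ)
          * (φ lam (q : ℤ) * Θp lam 0 + (φ lam ((q : ℤ) + 1) - θ lam (q : ℤ)) / 2 * Φp lam 0)
        - ((((φ lam ((q : ℤ) + 1) - θ lam (q : ℤ)) / 2) ^ 2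
            - (1 - ((φ lam ((q : ℤ) + 1) + θ lam (q : ℤ)) / 2) ^ 2)) / φ lam (q : ℤ))
          * Φp lam 0))
    (s : ℂ)
    (hs : s = (((a0 0 : ℝ) : ℂ) * mp - ((v 0 : ℝ) : ℂ)) * fp0 - ((a0 0 + u 0 : ℝ) : ℂ) * fp1) :
    (φ lam (q : ℤ) / ((a0 0 : ℝ) : ℂ)) * s = -(2 * Complex.I * ω) * (1 + Atv) + Jtv :=
  s_hat_representation_general q a0 ha0 θ φ u v Θp Φp lam hφq ω hω mp hmp fp0 fp1 hfp0 hfp1 Atv Jtv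
    hAtv hJtv s hs
end

section
/- For all λ ∈ ℂ with φ_q(λ) ≠ 0: 4(1 − Δ(λ)²)(1 + A(λ))² + J(λ)² = 4(1 − Δ(λ)²) + 4(1 − Δ(λ)²)(1 + Ã(λ))² + J̃(λ)². -/
/-! The Wronskian of two solutions of a Jacobi equation is constant in `n`. Evaluated over one
period it gives `θ_q φ_{q+1} - θ_{q+1} φ_q = 1`, i.e. `Δ² - ϕ² - θ_{q+1} φ_q = 1`, and evaluated
beyond the support of the perturbation (where `θ⁺, φ⁺` coincide with `θ, φ`) it gives
`(a_0/a⁰_0)(θ⁺_0 φ⁺_1 - θ⁺_1 φ⁺_0) = 1`. Eliminating `θ_{q+1}` with the first relation,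
`J² - J̃² = (J - J̃)(J + J̃)` and `(1 + A)² - (1 + Ã)²` combine so that the difference of the two
sides is `4(1 - Δ²)` times `(a_0/a⁰_0)(θ⁺_0 φ⁺_1 - θ⁺_1 φ⁺_0) - 1`, which vanishes. -/

namespace JacobiSol

variable {a b : ℤ → ℂ} {lam : ℂ} {f g : ℤ → ℂ}

theorem wron_add_one (hf : JacobiSol a b lam f) (hg : JacobiSol a b lam g) (n : ℤ) :
    Wron a f g (n + 1) = Wron a f g n := by
  have hfn := hf (n + 1)
  have hgn := hg (n + 1)
  simp only [add_sub_cancel_right] at hfn hgn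
  unfold Wron
  linear_combination f (n + 1) * hgn - g (n + 1) * hfn

theorem wron_eq_wron_zero (hf : JacobiSol a b lam f) (hg : JacobiSol a b lam g) (n : ℤ) :
    Wron a f g n = Wron a f g 0 := by
  induction n using Int.induction_on with
  | zero => rfl
  | succ i ih => rw [wron_add_one hf hg, ih]
  | pred i ih => rw [← ih, ← wron_add_one hf hg, sub_add_cancel]

theorem wron_eq (hf : JacobiSol a b lam f) (hg : JacobiSol a b lam g) (m n : ℤ) :
    Wron a f g m = Wron a f g n := by
  rw [wron_eq_wron_zero hf hg m, wron_eq_wron_zero hf hg n]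

theorem wron_eq_of_initial (hf : JacobiSol a b lam f) (hg : JacobiSol a b lam g)
    (hf0 : f 0 = 1) (hf1 : f 1 = 0) (hg0 : g 0 = 0) (hg1 : g 1 = 1) (n : ℤ) :
    Wron a f g n = a 0 := by
  rw [wron_eq_wron_zero hf hg, Wron, zero_add, hf0, hf1, hg0, hg1]
  ring

theorem det_eq_one_of_initial (hf : JacobiSol a b lam f) (hg : JacobiSol a b lam g)
    (hf0 : f 0 = 1) (hf1 : f 1 = 0) (hg0 : g 0 = 0) (hg1 : g 1 = 1) {n : ℤ}
    (han : a n = a 0) (ha0 : a 0 ≠ 0) :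
    f n * g (n + 1) - f (n + 1) * g n = 1 := by
  have hW := wron_eq_of_initial hf hg hf0 hf1 hg0 hg1 n
  rw [Wron, han] at hW
  exact mul_left_cancel₀ ha0 (hW.trans (mul_one _).symm)

theorem wron_eq_of_eq_at {a' b' f' g' : ℤ → ℂ} (hf : JacobiSol a b lam f)
    (hg : JacobiSol a b lam g) (hf' : JacobiSol a' b' lam f') (hg' : JacobiSol a' b' lam g')
    {N : ℤ} (ha : a N = a' N) (hfN : f N = f' N) (hfN' : f (N + 1) = f' (N + 1))
    (hgN : g N = g' N) (hgN' : g (N + 1) = g' (N + 1)) (m n : ℤ) :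
    Wron a f g m = Wron a' f' g' n := by
  rw [wron_eq hf hg m N, wron_eq hf' hg' n N, Wron, Wron, ha, hfN, hfN', hgN, hgN']

end JacobiSol

-- `P, θ'` stand for `φ_q, θ_{q+1}` and `x, X, y, Y` for `θ⁺_0, θ⁺_1, φ⁺_0, φ⁺_1`.
theorem sq_identity_of_dets_eq_one {Δ ϕ P θ' x X y Y r t : ℂ} (hP : P ≠ 0)
    (hdet : Δ ^ 2 - ϕ ^ 2 - θ' * P = 1) (hW : r * (x * Y - X * y) = 1) :
    4 * (1 - Δ ^ 2) * (1 + ((1 / 2) * (r * Y + t * y + x) - 1)) ^ 2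
        + (-(r * P * X + ϕ * (r * Y - x) + t * (P * x + ϕ * y) + θ' * y)) ^ 2
      = 4 * (1 - Δ ^ 2)
        + 4 * (1 - Δ ^ 2) * (1 + ((1 / 2) * (r * Y + t * y - x - (2 * ϕ / P) * y) - 1)) ^ 2
        + (-(r * P * X + ϕ * (r * Y - x) + t * (P * x + ϕ * y)
            - ((ϕ ^ 2 - (1 - Δ ^ 2)) / P) * y)) ^ 2 := by
  obtain rfl : θ' = -(ϕ ^ 2 + 1 - Δ ^ 2) / P := by
    field_simp
    linear_combination -hdet
  field_simp
  linear_combination 16 * (1 - Δ ^ 2) * P ^ 2 * hW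

theorem A_J_tilde_identity_general
    (q : ℕ) (a0 b0 : ℤ → ℝ)
    (hpa : ∀ n : ℤ, a0 (n + (q : ℤ)) = a0 n)
    (ha0 : ∀ n : ℤ, 0 < a0 n)
    (θ φ : ℂ → ℤ → ℂ)
    (hθ : ∀ lam : ℂ, JacobiSol (fun n => (a0 n : ℂ)) (fun n => (b0 n : ℂ)) lam (θ lam))
    (hθ0 : ∀ lam : ℂ, θ lam 0 = 1) (hθ1 : ∀ lam : ℂ, θ lam 1 = 0)
    (hφ : ∀ lam : ℂ, JacobiSol (fun n => (a0 n : ℂ)) (fun n => (b0 n : ℂ)) lam (φ lam))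
    (hφ0 : ∀ lam : ℂ, φ lam 0 = 0) (hφ1 : ∀ lam : ℂ, φ lam 1 = 1)
    (p : ℕ) (u v : ℤ → ℝ)
    (hsupp : ∀ n : ℤ, (n < 0 ∨ (p : ℤ) < n) → u n = 0 ∧ v n = 0)
    (Θp Φp : ℂ → ℤ → ℂ)
    (hΘp : ∀ lam : ℂ, JacobiSol (fun n => ((a0 n + u n : ℝ) : ℂ))
      (fun n => ((b0 n + v n : ℝ) : ℂ)) lam (Θp lam))
    (hΘpb : ∀ lam : ℂ, ∀ n : ℤ, (p : ℤ) + 1 ≤ n → Θp lam n = θ lam n)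
    (hΦp : ∀ lam : ℂ, JacobiSol (fun n => ((a0 n + u n : ℝ) : ℂ))
      (fun n => ((b0 n + v n : ℝ) : ℂ)) lam (Φp lam))
    (hΦpb : ∀ lam : ℂ, ∀ n : ℤ, (p : ℤ) + 1 ≤ n → Φp lam n = φ lam n)
    :
    ∀ lam : ℂ, φ lam (q : ℤ) ≠ 0 →
      (let Δv : ℂ := (φ lam ((q : ℤ) + 1) + θ lam (q : ℤ)) / 2
       let ϕv : ℂ := (φ lam ((q : ℤ) + 1) - θ lam (q : ℤ)) / 2
       let r : ℂ := ((a0 0 + u 0 : ℝ) : ℂ) / ((a0 0 : ℝ) : ℂ)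
       let t : ℂ := ((v 0 : ℝ) : ℂ) / ((a0 0 : ℝ) : ℂ)
       let Av : ℂ := (1 / 2) * (r * Φp lam 1 + t * Φp lam 0 + Θp lam 0) - 1
       let Jv : ℂ := -(r * φ lam (q : ℤ) * Θp lam 1 + ϕv * (r * Φp lam 1 - Θp lam 0)
            + t * (φ lam (q : ℤ) * Θp lam 0 + ϕv * Φp lam 0)
            + θ lam ((q : ℤ) + 1) * Φp lam 0)
       let Atv : ℂ := (1 / 2) * (r * Φp lam 1 + t * Φp lam 0 - Θp lam 0
            - (2 * ϕv / φ lam (q : ℤ)) * Φp lam 0) - 1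
       let Jtv : ℂ := -(r * φ lam (q : ℤ) * Θp lam 1 + ϕv * (r * Φp lam 1 - Θp lam 0)
            + t * (φ lam (q : ℤ) * Θp lam 0 + ϕv * Φp lam 0)
            - ((ϕv ^ 2 - (1 - Δv ^ 2)) / φ lam (q : ℤ)) * Φp lam 0)
       4 * (1 - Δv ^ 2) * (1 + Av) ^ 2 + Jv ^ 2
         = 4 * (1 - Δv ^ 2) + 4 * (1 - Δv ^ 2) * (1 + Atv) ^ 2 + Jtv ^ 2) := by
  intro lam hP
  have ha00 : ((a0 0 : ℝ) : ℂ) ≠ 0 := by exact_mod_cast (ha0 0).ne'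
  have hdet : θ lam q * φ lam (q + 1) - θ lam (q + 1) * φ lam q = 1 :=
    (hθ lam).det_eq_one_of_initial (hφ lam) (hθ0 lam) (hθ1 lam) (hφ0 lam) (hφ1 lam)
      (by simpa using congrArg ((↑) : ℝ → ℂ) (hpa 0)) ha00
  have hW : ((a0 0 + u 0 : ℝ) : ℂ) * (Θp lam 0 * Φp lam 1 - Θp lam 1 * Φp lam 0)
      = ((a0 0 : ℝ) : ℂ) := by
    have hN : (p : ℤ) + 1 ≤ p + 1 + 1 := by omega
    have hu : u (p + 1) = 0 := (hsupp (p + 1) (Or.inr (by omega))).1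
    have h := (hΘp lam).wron_eq_of_eq_at (hΦp lam) (hθ lam) (hφ lam) (N := p + 1)
      (by simp [hu]) (hΘpb lam _ le_rfl) (hΘpb lam _ hN) (hΦpb lam _ le_rfl) (hΦpb lam _ hN) 0 0
    rwa [JacobiSol.wron_eq_of_initial (hθ lam) (hφ lam) (hθ0 lam) (hθ1 lam) (hφ0 lam) (hφ1 lam),
      Wron, zero_add] at h
  exact sq_identity_of_dets_eq_one hP (by linear_combination hdet)
    (by rw [div_mul_eq_mul_div, hW, div_self ha00])

/-- `4(1−Δ²)(1+A)² + J² = 4(1−Δ²) + 4(1−Δ²)(1+Ã)² + J̃²` for all `λ` with `φ_q(λ) ≠ 0`. -/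
theorem A_J_tilde_identity
    (q : ℕ) (hq : 2 ≤ q) (a0 b0 : ℤ → ℝ)
    (hpa : ∀ n : ℤ, a0 (n + (q : ℤ)) = a0 n) (hpb : ∀ n : ℤ, b0 (n + (q : ℤ)) = b0 n)
    (ha0 : ∀ n : ℤ, 0 < a0 n) (hprod : ∏ j ∈ Finset.Icc (1 : ℤ) (q : ℤ), a0 j = 1)
    (θ φ : ℂ → ℤ → ℂ)
    (hθ : ∀ lam : ℂ, JacobiSol (fun n => (a0 n : ℂ)) (fun n => (b0 n : ℂ)) lam (θ lam))
    (hθ0 : ∀ lam : ℂ, θ lam 0 = 1) (hθ1 : ∀ lam : ℂ, θ lam 1 = 0)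
    (hφ : ∀ lam : ℂ, JacobiSol (fun n => (a0 n : ℂ)) (fun n => (b0 n : ℂ)) lam (φ lam))
    (hφ0 : ∀ lam : ℂ, φ lam 0 = 0) (hφ1 : ∀ lam : ℂ, φ lam 1 = 1)
    (p : ℕ) (hp : 1 ≤ p) (u v : ℤ → ℝ)
    (hsupp : ∀ n : ℤ, (n < 0 ∨ (p : ℤ) < n) → u n = 0 ∧ v n = 0)
    (hapos : ∀ n : ℤ, 0 < a0 n + u n)
    (Θp Φp : ℂ → ℤ → ℂ)
    (hΘp : ∀ lam : ℂ, JacobiSol (fun n => ((a0 n + u n : ℝ) : ℂ))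
      (fun n => ((b0 n + v n : ℝ) : ℂ)) lam (Θp lam))
    (hΘpb : ∀ lam : ℂ, ∀ n : ℤ, (p : ℤ) + 1 ≤ n → Θp lam n = θ lam n)
    (hΦp : ∀ lam : ℂ, JacobiSol (fun n => ((a0 n + u n : ℝ) : ℂ))
      (fun n => ((b0 n + v n : ℝ) : ℂ)) lam (Φp lam))
    (hΦpb : ∀ lam : ℂ, ∀ n : ℤ, (p : ℤ) + 1 ≤ n → Φp lam n = φ lam n)
    :
    ∀ lam : ℂ, φ lam (q : ℤ) ≠ 0 →
      (let Δv : ℂ := (φ lam ((q : ℤ) + 1) + θ lam (q : ℤ)) / 2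
       let ϕv : ℂ := (φ lam ((q : ℤ) + 1) - θ lam (q : ℤ)) / 2
       let r : ℂ := ((a0 0 + u 0 : ℝ) : ℂ) / ((a0 0 : ℝ) : ℂ)
       let t : ℂ := ((v 0 : ℝ) : ℂ) / ((a0 0 : ℝ) : ℂ)
       let Av : ℂ := (1 / 2) * (r * Φp lam 1 + t * Φp lam 0 + Θp lam 0) - 1
       let Jv : ℂ := -(r * φ lam (q : ℤ) * Θp lam 1 + ϕv * (r * Φp lam 1 - Θp lam 0)
            + t * (φ lam (q : ℤ) * Θp lam 0 + ϕv * Φp lam 0)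
            + θ lam ((q : ℤ) + 1) * Φp lam 0)
       let Atv : ℂ := (1 / 2) * (r * Φp lam 1 + t * Φp lam 0 - Θp lam 0
            - (2 * ϕv / φ lam (q : ℤ)) * Φp lam 0) - 1
       let Jtv : ℂ := -(r * φ lam (q : ℤ) * Θp lam 1 + ϕv * (r * Φp lam 1 - Θp lam 0)
            + t * (φ lam (q : ℤ) * Θp lam 0 + ϕv * Φp lam 0)
            - ((ϕv ^ 2 - (1 - Δv ^ 2)) / φ lam (q : ℤ)) * Φp lam 0)
       4 * (1 - Δv ^ 2) * (1 + Av) ^ 2 + Jv ^ 2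
         = 4 * (1 - Δv ^ 2) + 4 * (1 - Δv ^ 2) * (1 + Atv) ^ 2 + Jtv ^ 2) :=
  A_J_tilde_identity_general q a0 b0 hpa ha0 θ φ hθ hθ0 hθ1 hφ hφ0 hφ1 p u v hsupp Θp Φp hΘp hΘpb
    hΦp hΦpb
end
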